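/- Let q and r be positive natural numbers and let B be a real q×r matrix. Then B·(I_r + BᵀB)^{-1/2} = (I_q + BBᵀ)^{-1/2}·B. -/

import Mathlib

/-!
Since `(I + B Bᵀ) B = B (I + Bᵀ B)`, it suffices to show that an intertwining `S X = X T` of
positive definite matrices passes to their square roots. The defect `Y = √S X - X √T` solves
the Sylvester equation `√S Y + Y √T = S X - X T = 0`, and the trace of `Yᴴ (√S Y + Y √T)`
writes `0` as a sum of two nonnegative traces, which forces `Y = 0` as `√S` is invertible.
-/

open Matrix

/-- Inverse of the unique symmetric positive semidefinite square root of a positive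
(semi)definite real matrix (junk value `0` if `P` is not positive semidefinite). -/
noncomputable def invSqrt {n : Type*} [Fintype n] [DecidableEq n]
    (P : Matrix n n ℝ) : Matrix n n ℝ := by
  classical exact if h : P.PosSemidef then
    (h.1.eigenvectorUnitary.1 * diagonal (Real.sqrt ∘ h.1.eigenvalues) *
      (star h.1.eigenvectorUnitary : Matrix n n ℝ))⁻¹ else 0

open scoped MatrixOrder ComplexOrder

namespace Matrix.PosDef

variable {𝕜 m n : Type*} [RCLike 𝕜] [Fintype m] [Fintype n] [DecidableEq m]

theorem posDef_sqrt {S : Matrix m m 𝕜} (hS : S.PosDef) : (CFC.sqrt S).PosDef :=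
  (CFC.sqrt_nonneg S).posSemidef.posDef_iff_isUnit.2 ((CFC.isUnit_sqrt_iff S).2 hS.isUnit)

theorem eq_zero_of_mul_add_mul_eq_zero {S : Matrix m m 𝕜} {T : Matrix n n 𝕜}
    {M : Matrix m n 𝕜} (hS : S.PosDef) (hT : T.PosSemidef) (h : S * M + M * T = 0) : M = 0 := by
  set D := CFC.sqrt S
  have hD : Dᴴ = D := (CFC.sqrt_nonneg S).posSemidef.isHermitian
  have htrace : ((D * M)ᴴ * (D * M)).trace + (M * T * Mᴴ).trace = 0 := by
    calc _ = (Mᴴ * (D * D * M + M * T)).trace := by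
          rw [conjTranspose_mul, hD, Matrix.mul_add, trace_add, trace_mul_cycle M T Mᴴ]
          simp only [Matrix.mul_assoc]
      _ = 0 := by rw [CFC.sqrt_mul_sqrt_self S, h, Matrix.mul_zero, trace_zero]
  have hDM : D * M = 0 := trace_conjTranspose_mul_self_eq_zero_iff.1
    ((add_eq_zero_iff_of_nonneg (posSemidef_conjTranspose_mul_self _).trace_nonneg
      (hT.mul_mul_conjTranspose_same M).trace_nonneg).1 htrace).1
  have hDdet : IsUnit D.det := (isUnit_iff_isUnit_det D).1 hS.posDef_sqrt.isUnit
  rw [← nonsing_inv_mul_cancel_left D M hDdet, hDM, Matrix.mul_zero]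

theorem sqrt_mul_eq_mul_sqrt [DecidableEq n] {S : Matrix m m 𝕜} {T : Matrix n n 𝕜}
    {X : Matrix m n 𝕜} (hS : S.PosDef) (hT : T.PosSemidef) (h : S * X = X * T) :
    CFC.sqrt S * X = X * CFC.sqrt T := by
  refine sub_eq_zero.1 <|
    hS.posDef_sqrt.eq_zero_of_mul_add_mul_eq_zero (CFC.sqrt_nonneg T).posSemidef ?_
  calc _ = CFC.sqrt S * CFC.sqrt S * X - X * (CFC.sqrt T * CFC.sqrt T) := by
        simp only [Matrix.mul_sub, Matrix.sub_mul, Matrix.mul_assoc, sub_add_sub_cancel]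
    _ = 0 := by rw [CFC.sqrt_mul_sqrt_self S, CFC.sqrt_mul_sqrt_self T, h, sub_self]

end Matrix.PosDef

section invSqrt

variable {m n : Type*} [Fintype m] [Fintype n] [DecidableEq m] [DecidableEq n]

theorem invSqrt_eq_inv_sqrt {P : Matrix n n ℝ} (hP : P.PosSemidef) :
    invSqrt P = (CFC.sqrt P)⁻¹ := by
  rw [invSqrt, dif_pos hP, CFC.sqrt_eq_real_sqrt P hP.nonneg, cfcₙ_eq_cfc, hP.1.cfc_eq,
    IsHermitian.cfc, Unitary.conjStarAlgAut_apply]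
  rfl

theorem mul_invSqrt_eq_invSqrt_mul {S : Matrix m m ℝ} {T : Matrix n n ℝ} {X : Matrix m n ℝ}
    (hS : S.PosDef) (hT : T.PosDef) (h : S * X = X * T) : X * invSqrt T = invSqrt S * X := by
  have hSdet : IsUnit (CFC.sqrt S).det := (isUnit_iff_isUnit_det _).1 hS.posDef_sqrt.isUnit
  have hTdet : IsUnit (CFC.sqrt T).det := (isUnit_iff_isUnit_det _).1 hT.posDef_sqrt.isUnit
  rw [invSqrt_eq_inv_sqrt hS.posSemidef, invSqrt_eq_inv_sqrt hT.posSemidef]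
  calc X * (CFC.sqrt T)⁻¹ = (CFC.sqrt S)⁻¹ * (CFC.sqrt S * X) * (CFC.sqrt T)⁻¹ := by
        rw [nonsing_inv_mul_cancel_left _ _ hSdet]
    _ = (CFC.sqrt S)⁻¹ * X := by
        rw [hS.sqrt_mul_eq_mul_sqrt hT.posSemidef h, Matrix.mul_assoc, Matrix.mul_assoc,
          mul_nonsing_inv _ hTdet, Matrix.mul_one]

end invSqrt

theorem stmt_1_general (q r : ℕ) (B : Matrix (Fin q) (Fin r) ℝ) :
    B * invSqrt (1 + Bᵀ * B) = invSqrt (1 + B * Bᵀ) * B := by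
  have hBtB : (Bᵀ * B).PosSemidef := posSemidef_conjTranspose_mul_self B
  have hBBt : (B * Bᵀ).PosSemidef := posSemidef_self_mul_conjTranspose B
  refine mul_invSqrt_eq_invSqrt_mul (PosDef.one.add_posSemidef hBBt)
    (PosDef.one.add_posSemidef hBtB) ?_
  simp only [Matrix.add_mul, Matrix.mul_add, Matrix.one_mul, Matrix.mul_one, Matrix.mul_assoc]

/-- `B·(I_r + BᵀB)^{-1/2} = (I_q + BBᵀ)^{-1/2}·B`. -/
theorem stmt_1 (q r : ℕ) (hq : 0 < q) (hr : 0 < r) (B : Matrix (Fin q) (Fin r) ℝ) :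
    B * invSqrt (1 + Bᵀ * B) = invSqrt (1 + B * Bᵀ) * B :=
  stmt_1_general q r B
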